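/- There exists a constant c₃ > 0 such that for every nonnegative random variable Y and every y ≥ 1, P(Y ≥ y) ≤ c₃ · y · ∫₀^{2/y} E[exp(-λY) - 1 + λY] dλ. -/
import Mathlib


open MeasureTheory

lemma phi_lb {u : ℝ} (hu : 1 ≤ u) : Real.exp (-2) ≤ Real.exp (-u) - 1 + u := by
  rcases le_total u 2 with h | h
  · have h1 : Real.exp (-2) ≤ Real.exp (-u) := Real.exp_le_exp.2 (by linarith)
    linarith
  · have h1 : (0:ℝ) < Real.exp (-u) := Real.exp_pos _
    have h2 : Real.exp (-2) ≤ 1 := Real.exp_le_one_iff.2 (by norm_num)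
    linarith

theorem stmt_4 : ∃ c₃ : ℝ, 0 < c₃ ∧
    ∀ (Ω : Type) [MeasurableSpace Ω] (μ : Measure Ω) [IsProbabilityMeasure μ]
      (Y : Ω → ℝ), Measurable Y → (∀ ω, 0 ≤ Y ω) →
      ∀ y : ℝ, 1 ≤ y →
        μ {ω | y ≤ Y ω} ≤ ENNReal.ofReal (c₃ * y) *
          ∫⁻ l in Set.Ioc (0 : ℝ) (2 / y),
            ∫⁻ ω, ENNReal.ofReal (Real.exp (-(l * Y ω)) - 1 + l * Y ω) ∂μ := by
  refine ⟨Real.exp 2, Real.exp_pos 2, ?_⟩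
  intro Ω _ μ _ Y hY hY0 y hy
  have hy0 : (0:ℝ) < y := lt_of_lt_of_le one_pos hy
  set s : Set Ω := {ω | y ≤ Y ω} with hs_def
  have hs : MeasurableSet s := measurableSet_le measurable_const hY
  -- pointwise bound on the inner integral for l ∈ (1/y, 2/y]
  have key : ∀ l ∈ Set.Ioc (1/y) (2/y),
      ENNReal.ofReal (Real.exp (-2)) * μ s ≤
        ∫⁻ ω, ENNReal.ofReal (Real.exp (-(l * Y ω)) - 1 + l * Y ω) ∂μ := by
    intro l hl
    calc ENNReal.ofReal (Real.exp (-2)) * μ s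
        = ∫⁻ _ in s, ENNReal.ofReal (Real.exp (-2)) ∂μ := (setLIntegral_const s _).symm
      _ ≤ ∫⁻ ω in s, ENNReal.ofReal (Real.exp (-(l * Y ω)) - 1 + l * Y ω) ∂μ := by
          refine setLIntegral_mono' hs ?_
          intro ω hω
          have hYω : y ≤ Y ω := hω
          have hl1 : 1/y < l := hl.1
          have hu : 1 ≤ l * Y ω := by
            have h1y : (0:ℝ) < 1/y := by positivity
            have : 1/y * y ≤ l * Y ω := by
              apply mul_le_mul (le_of_lt hl1) hYω (le_of_lt hy0) (le_of_lt (lt_trans h1y hl1))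
            rwa [one_div_mul_cancel (ne_of_gt hy0)] at this
          exact ENNReal.ofReal_le_ofReal (phi_lb hu)
      _ ≤ ∫⁻ ω, ENNReal.ofReal (Real.exp (-(l * Y ω)) - 1 + l * Y ω) ∂μ :=
          setLIntegral_le_lintegral _ _
  -- lower bound for the outer integral
  have hsub : Set.Ioc (1/y) (2/y) ⊆ Set.Ioc (0:ℝ) (2/y) :=
    Set.Ioc_subset_Ioc_left (by positivity)
  have hvol : (volume (Set.Ioc (1/y) (2/y))) = ENNReal.ofReal (1/y) := by
    rw [Real.volume_Ioc]
    congr 1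
    field_simp
    ring
  have hbound : ENNReal.ofReal (Real.exp (-2)) * μ s * ENNReal.ofReal (1/y) ≤
      ∫⁻ l in Set.Ioc (0:ℝ) (2/y),
        ∫⁻ ω, ENNReal.ofReal (Real.exp (-(l * Y ω)) - 1 + l * Y ω) ∂μ := by
    calc ENNReal.ofReal (Real.exp (-2)) * μ s * ENNReal.ofReal (1/y)
        = ∫⁻ _ in Set.Ioc (1/y) (2/y), ENNReal.ofReal (Real.exp (-2)) * μ s := by
          rw [setLIntegral_const, hvol]
      _ ≤ ∫⁻ l in Set.Ioc (1/y) (2/y),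
            ∫⁻ ω, ENNReal.ofReal (Real.exp (-(l * Y ω)) - 1 + l * Y ω) ∂μ :=
          setLIntegral_mono' measurableSet_Ioc key
      _ ≤ ∫⁻ l in Set.Ioc (0:ℝ) (2/y),
            ∫⁻ ω, ENNReal.ofReal (Real.exp (-(l * Y ω)) - 1 + l * Y ω) ∂μ :=
          lintegral_mono_set hsub
  -- combine
  have hconst : ENNReal.ofReal (Real.exp 2 * y) *
      (ENNReal.ofReal (Real.exp (-2)) * ENNReal.ofReal (1/y)) = 1 := by
    rw [← ENNReal.ofReal_mul (le_of_lt (Real.exp_pos _)),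
        ← ENNReal.ofReal_mul (by positivity)]
    have : Real.exp 2 * y * (Real.exp (-2) * (1/y)) = 1 := by
      rw [Real.exp_neg]
      field_simp
    rw [this, ENNReal.ofReal_one]
  calc μ s = ENNReal.ofReal (Real.exp 2 * y) *
        (ENNReal.ofReal (Real.exp (-2)) * μ s * ENNReal.ofReal (1/y)) := by
        rw [show ENNReal.ofReal (Real.exp (-2)) * μ s * ENNReal.ofReal (1/y)
            = (ENNReal.ofReal (Real.exp (-2)) * ENNReal.ofReal (1/y)) * μ s by ring,
          ← mul_assoc, hconst, one_mul]
    _ ≤ ENNReal.ofReal (Real.exp 2 * y) *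
        ∫⁻ l in Set.Ioc (0:ℝ) (2/y),
          ∫⁻ ω, ENNReal.ofReal (Real.exp (-(l * Y ω)) - 1 + l * Y ω) ∂μ :=
        mul_le_mul_right hbound _
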